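/- arXiv:2307.03075 — 4 statements merged into one kernel-verified Lean document; each statement's English description precedes it below -/
import Mathlib

section
/- Given a bimonoidal category C, matrix multiplication defines a functor Mat_{l,m}(C) × Mat_{m,n}(C) → Mat_{l,n}(C), where on objects (AB)_{ik} = ⊕_j (A_{ij} ⊗ B_{jk}) and on morphisms (fg)_{ik} = ⊕_j (f_{ij} ⊗ g_{jk}); i.e. this assignment preserves identities and composition. -/
open CategoryTheory MonoidalCategory

universe v u

structure Bimonoidal (C : Type u) [Category.{v} C] where
  addMon : MonoidalCategory C
  addSymm : @SymmetricCategory C _ addMon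
  mulMon : MonoidalCategory C
  distL : ∀ X Y Z : C,
    mulMon.tensorObj X (addMon.tensorObj Y Z) ≅
      addMon.tensorObj (mulMon.tensorObj X Y) (mulMon.tensorObj X Z)
  distR : ∀ X Y Z : C,
    mulMon.tensorObj (addMon.tensorObj X Y) Z ≅
      addMon.tensorObj (mulMon.tensorObj X Z) (mulMon.tensorObj Y Z)
  nullL : ∀ X : C, mulMon.tensorObj addMon.tensorUnit X ≅ addMon.tensorUnit
  nullR : ∀ X : C, mulMon.tensorObj X addMon.tensorUnit ≅ addMon.tensorUnit

namespace Bimonoidal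

variable {C : Type u} [Category.{v} C] (B : Bimonoidal C)

def add (X Y : C) : C := B.addMon.tensorObj X Y
def zero : C := B.addMon.tensorUnit
def mul (X Y : C) : C := B.mulMon.tensorObj X Y
def one : C := B.mulMon.tensorUnit

def addHom {X X' Y Y' : C} (f : X ⟶ X') (g : Y ⟶ Y') : B.add X Y ⟶ B.add X' Y' :=
  B.addMon.tensorHom f g

def mulHom {X X' Y Y' : C} (f : X ⟶ X') (g : Y ⟶ Y') : B.mul X Y ⟶ B.mul X' Y' :=
  B.mulMon.tensorHom f g

def addBraid (X Y : C) : B.add X Y ≅ B.add Y X :=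
  @BraidedCategory.braiding C _ B.addMon B.addSymm.toBraidedCategory X Y

def mulAssocIso (X Y Z : C) : B.mul (B.mul X Y) Z ≅ B.mul X (B.mul Y Z) :=
  B.mulMon.associator X Y Z

def mulLamIso (X : C) : B.mul B.one X ≅ X := B.mulMon.leftUnitor X
def mulRhoIso (X : C) : B.mul X B.one ≅ X := B.mulMon.rightUnitor X

def addAssocIso (X Y Z : C) : B.add (B.add X Y) Z ≅ B.add X (B.add Y Z) :=
  B.addMon.associator X Y Z
def addLamIso (X : C) : B.add B.zero X ≅ X := B.addMon.leftUnitor X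
def addRhoIso (X : C) : B.add X B.zero ≅ X := B.addMon.rightUnitor X

end Bimonoidal

abbrev MatO (C : Type u) (m n : ℕ) : Type u := Fin m → Fin n → C

namespace Bimonoidal

variable {C : Type u} [Category.{v} C] (B : Bimonoidal C)

def finSum : ∀ {k : ℕ}, (Fin k → C) → C
  | 0, _ => B.zero
  | _ + 1, f => B.add (f 0) (finSum fun j => f j.succ)

def finSumHom : ∀ {k : ℕ} {F G : Fin k → C}, (∀ j, F j ⟶ G j) → (B.finSum F ⟶ B.finSum G)
  | 0, _, _, _ => 𝟙 B.zero
  | _ + 1, _, _, f => B.addHom (f 0) (finSumHom fun j => f j.succ)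

def matMul {l m n : ℕ} (A : MatO C l m) (M : MatO C m n) : MatO C l n :=
  fun i k => B.finSum fun j => B.mul (A i j) (M j k)

def matMulHom {l m n : ℕ} {A A' : MatO C l m} {M M' : MatO C m n}
    (f : A ⟶ A') (g : M ⟶ M') : B.matMul A M ⟶ B.matMul A' M' :=
  fun i k => B.finSumHom fun j => B.mulHom (f i j) (g j k)

def oneMat (m : ℕ) : MatO C m m := fun i j => if i = j then B.one else B.zero

theorem addHom_id (X Y : C) : B.addHom (𝟙 X) (𝟙 Y) = 𝟙 (B.add X Y) :=
  B.addMon.id_tensorHom_id X Y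

theorem addHom_comp {X X' X'' Y Y' Y'' : C} (f : X ⟶ X') (f' : X' ⟶ X'')
    (g : Y ⟶ Y') (g' : Y' ⟶ Y'') :
    B.addHom (f ≫ f') (g ≫ g') = B.addHom f g ≫ B.addHom f' g' :=
  (B.addMon.tensorHom_comp_tensorHom f g f' g').symm

theorem mulHom_id (X Y : C) : B.mulHom (𝟙 X) (𝟙 Y) = 𝟙 (B.mul X Y) :=
  B.mulMon.id_tensorHom_id X Y

theorem mulHom_comp {X X' X'' Y Y' Y'' : C} (f : X ⟶ X') (f' : X' ⟶ X'')
    (g : Y ⟶ Y') (g' : Y' ⟶ Y'') :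
    B.mulHom (f ≫ f') (g ≫ g') = B.mulHom f g ≫ B.mulHom f' g' :=
  (B.mulMon.tensorHom_comp_tensorHom f g f' g').symm

theorem finSumHom_id : ∀ {k : ℕ} (F : Fin k → C),
    B.finSumHom (fun j => 𝟙 (F j)) = 𝟙 (B.finSum F)
  | 0, _ => rfl
  | _ + 1, F => by
    rw [finSumHom, finSumHom_id]
    exact B.addHom_id _ _

theorem finSumHom_comp : ∀ {k : ℕ} {F G H : Fin k → C}
    (f : ∀ j, F j ⟶ G j) (g : ∀ j, G j ⟶ H j),
    B.finSumHom (fun j => f j ≫ g j) = B.finSumHom f ≫ B.finSumHom g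
  | 0, _, _, _, _, _ => (Category.id_comp _).symm
  | _ + 1, _, _, _, f, g => by
    rw [finSumHom, finSumHom_comp, addHom_comp]
    rfl

variable {l m n : ℕ}

theorem matMulHom_id (A : MatO C l m) (M : MatO C m n) :
    B.matMulHom (𝟙 A) (𝟙 M) = 𝟙 (B.matMul A M) := by
  funext i k
  exact (congrArg B.finSumHom (funext fun j => B.mulHom_id (A i j) (M j k))).trans
    (B.finSumHom_id _)

theorem matMulHom_comp {A A' A'' : MatO C l m} {M M' M'' : MatO C m n}
    (f : A ⟶ A') (f' : A' ⟶ A'') (g : M ⟶ M') (g' : M' ⟶ M'') :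
    B.matMulHom (f ≫ f') (g ≫ g') = B.matMulHom f g ≫ B.matMulHom f' g' := by
  funext i k
  exact (congrArg B.finSumHom
    (funext fun j => B.mulHom_comp (f i j) (f' i j) (g j k) (g' j k))).trans
    (B.finSumHom_comp _ _)

end Bimonoidal

/-- for a bimonoidal category `C`, matrix multiplication
`(A, M) ↦ AM`, `(AM)_{ik} = ⊕_j A_{ij} ⊗ M_{jk}` on objects and
`(f, g) ↦ (fg)`, `(fg)_{ik} = ⊕_j f_{ij} ⊗ g_{jk}` on morphisms, defines a
functor `Mat_{l,m}(C) × Mat_{m,n}(C) → Mat_{l,n}(C)`: it preserves identities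
and composition. -/
theorem stmt5 {C : Type u} [Category.{v} C] (B : Bimonoidal C) (l m n : ℕ) :
    (∀ (A : MatO C l m) (M : MatO C m n),
      B.matMulHom (𝟙 A) (𝟙 M) = 𝟙 (B.matMul A M)) ∧
    (∀ (A A' A'' : MatO C l m) (M M' M'' : MatO C m n)
      (f : A ⟶ A') (f' : A' ⟶ A'') (g : M ⟶ M') (g' : M' ⟶ M''),
      B.matMulHom (f ≫ f') (g ≫ g') = B.matMulHom f g ≫ B.matMulHom f' g') :=
  ⟨B.matMulHom_id, fun _ _ _ _ _ _ => B.matMulHom_comp⟩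
end

section
/- In the bicategory Mat(C) over a bimonoidal category C, the object m + n is a biproduct of m and n: for every object l there are equivalences of categories Hom(m+n, l) ≃ Hom(m,l) × Hom(n,l) and Hom(l, m+n) ≃ Hom(l,m) × Hom(l,n), given by splitting a matrix into blocks of rows (respectively columns). -/
open CategoryTheory MonoidalCategory

universe v u

/-- Splitting a matrix of size `(m+n) × l` into its first `m` rows and its last
`n` rows, as a functor `Mat_{m+n,l}(C) ⥤ Mat_{m,l}(C) × Mat_{n,l}(C)`. -/
def splitRows (C : Type u) [Category.{v} C] (m n l : ℕ) :
    MatO C (m + n) l ⥤ (MatO C m l) × (MatO C n l) where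
  obj M := (fun i j => M (Fin.castAdd n i) j, fun i j => M (Fin.natAdd m i) j)
  map f := (fun i j => f (Fin.castAdd n i) j, fun i j => f (Fin.natAdd m i) j)
  map_id _ := rfl
  map_comp _ _ := rfl

/-- Splitting a matrix of size `l × (m+n)` into its first `m` columns and its
last `n` columns, as a functor `Mat_{l,m+n}(C) ⥤ Mat_{l,m}(C) × Mat_{l,n}(C)`. -/
def splitCols (C : Type u) [Category.{v} C] (m n l : ℕ) :
    MatO C l (m + n) ⥤ (MatO C l m) × (MatO C l n) where
  obj M := (fun i j => M i (Fin.castAdd n j), fun i j => M i (Fin.natAdd m j))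
  map f := (fun i j => f i (Fin.castAdd n j), fun i j => f i (Fin.natAdd m j))
  map_id _ := rfl
  map_comp _ _ := rfl

/-- in the bicategory `Mat(C)` over a bimonoidal category `C`, the
object `m + n` is a biproduct of `m` and `n`: for every object `l`, splitting
into blocks of rows (resp. columns) gives equivalences of categories
`Hom(m+n, l) ≃ Hom(m,l) × Hom(n,l)` and `Hom(l, m+n) ≃ Hom(l,m) × Hom(l,n)`. -/
theorem stmt8 {C : Type u} [Category.{v} C] (B : Bimonoidal C) (m n l : ℕ) :
    (splitRows C m n l).IsEquivalence ∧ (splitCols C m n l).IsEquivalence := by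
  constructor
  · constructor
    case faithful =>
      constructor
      intro M N f g h
      funext i j
      refine Fin.addCases (fun i => ?_) (fun i => ?_) i
      · exact congrFun (congrFun (congrArg Prod.fst h) i) j
      · exact congrFun (congrFun (congrArg Prod.snd h) i) j
    case full =>
      constructor
      intro M N g
      refine ⟨fun i j => Fin.addCases (motive := fun i => M i j ⟶ N i j)
        (fun i => g.1 i j) (fun i => g.2 i j) i, ?_⟩
      refine Prod.ext (funext fun i => funext fun j => ?_)
        (funext fun i => funext fun j => ?_)
      · simpa [splitRows] using Fin.addCases_left (n := n) i
      · simpa [splitRows] using Fin.addCases_right (m := m) i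
    case essSurj =>
      constructor
      intro P
      refine ⟨fun i j => Fin.addCases (fun i => P.1 i j) (fun i => P.2 i j) i,
        ⟨CategoryTheory.eqToIso ?_⟩⟩
      refine Prod.ext (funext fun i => funext fun j => ?_)
        (funext fun i => funext fun j => ?_)
      · simpa [splitRows] using Fin.addCases_left (n := n) i
      · simpa [splitRows] using Fin.addCases_right (m := m) i
  · constructor
    case faithful =>
      constructor
      intro M N f g h
      funext i j
      refine Fin.addCases (fun j => ?_) (fun j => ?_) j
      · exact congrFun (congrFun (congrArg Prod.fst h) i) j
      · exact congrFun (congrFun (congrArg Prod.snd h) i) j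
    case full =>
      constructor
      intro M N g
      refine ⟨fun i j => Fin.addCases (motive := fun j => M i j ⟶ N i j)
        (fun j => g.1 i j) (fun j => g.2 i j) j, ?_⟩
      refine Prod.ext (funext fun i => funext fun j => ?_)
        (funext fun i => funext fun j => ?_)
      · simpa [splitCols] using Fin.addCases_left (n := n) j
      · simpa [splitCols] using Fin.addCases_right (m := m) j
    case essSurj =>
      constructor
      intro P
      refine ⟨fun i j => Fin.addCases (fun j => P.1 i j) (fun j => P.2 i j) j,
        ⟨CategoryTheory.eqToIso ?_⟩⟩
      refine Prod.ext (funext fun i => funext fun j => ?_)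
        (funext fun i => funext fun j => ?_)
      · simpa [splitCols] using Fin.addCases_left (n := n) j
      · simpa [splitCols] using Fin.addCases_right (m := m) j
end

section
/- Let C be a dagger compact category with biproducts, let A be an object with dual A*, and let U_1, ..., U_n : A → A be a unitary error basis, i.e. unitaries such that the morphism μ = (1/√n) · column(ε_A ∘ (U_1 ⊗ 1_{A*}), ..., ε_A ∘ (U_n ⊗ 1_{A*})) : A ⊗ A* → ⊕_{i=1}^n I is unitary. Define the controlled operation γ = ⊕_{i=1}^n U_i† : ⊕_{i=1}^n A → ⊕_{i=1}^n A. Then teleportation holds: γ ∘ (μ ⊗ 1_A) ∘ (1_A ⊗ η_A) = (1/√n)·diag(1_A,...,1_A) ∘ Δ, i.e. composing the measurement μ on A ⊗ A* with the controlled correction γ on A recovers (1/√n) times the n-fold diagonal copy of the identity on A. -/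
open CategoryTheory MonoidalCategory Limits ZeroObject

/-- A dagger structure on a category: an identity-on-objects involutive
contravariant functor. -/
structure Dagger (C : Type*) [Category C] where
  dag : ∀ {X Y : C}, (X ⟶ Y) → (Y ⟶ X)
  dag_id : ∀ X : C, dag (𝟙 X) = 𝟙 X
  dag_comp : ∀ {X Y Z : C} (f : X ⟶ Y) (g : Y ⟶ Z), dag (f ≫ g) = dag g ≫ dag f
  dag_dag : ∀ {X Y : C} (f : X ⟶ Y), dag (dag f) = f

lemma aux_retr {C : Type*} [Category C] [MonoidalCategory C]
    (A A' : C) (ε : A ⊗ A' ⟶ 𝟙_ C) (η : 𝟙_ C ⟶ A' ⊗ A)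
    (snake : (ρ_ A).inv ≫ (A ◁ η) ≫ (α_ A A' A).inv ≫ (ε ▷ A) ≫ (λ_ A).hom = 𝟙 A)
    {Z V : C} (v : V ⟶ Z ⊗ A) :
    (ρ_ V).inv ≫ (V ◁ η) ≫ (α_ V A' A).inv ≫
      (((v ▷ A') ≫ (α_ Z A A').hom ≫ (Z ◁ ε) ≫ (ρ_ Z).hom) ▷ A) = v := by
  have key : (ρ_ (Z ⊗ A)).inv ≫ ((Z ⊗ A) ◁ η) ≫ (α_ (Z ⊗ A) A' A).inv ≫
      (((α_ Z A A').hom ≫ (Z ◁ ε) ≫ (ρ_ Z).hom) ▷ A) =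
      Z ◁ ((ρ_ A).inv ≫ (A ◁ η) ≫ (α_ A A' A).inv ≫ (ε ▷ A) ≫ (λ_ A).hom) := by
    monoidal
  calc (ρ_ V).inv ≫ (V ◁ η) ≫ (α_ V A' A).inv ≫
      (((v ▷ A') ≫ (α_ Z A A').hom ≫ (Z ◁ ε) ≫ (ρ_ Z).hom) ▷ A)
      = v ≫ ((ρ_ (Z ⊗ A)).inv ≫ ((Z ⊗ A) ◁ η) ≫ (α_ (Z ⊗ A) A' A).inv ≫
          (((α_ Z A A').hom ≫ (Z ◁ ε) ≫ (ρ_ Z).hom) ▷ A)) := by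
        simp only [comp_whiskerRight, Category.assoc]
        rw [rightUnitor_inv_naturality_assoc, ← whisker_exchange_assoc,
          associator_inv_naturality_left_assoc]
    _ = v := by rw [key, snake]; simp

lemma aux_zero_whisker {C : Type*} [Category C] [MonoidalCategory C]
    [HasZeroMorphisms C] [HasZeroObject C]
    (A A' : C) (ε : A ⊗ A' ⟶ 𝟙_ C) (η : 𝟙_ C ⟶ A' ⊗ A)
    (snake : (ρ_ A).inv ≫ (A ◁ η) ≫ (α_ A A' A).inv ≫ (ε ▷ A) ≫ (λ_ A).hom = 𝟙 A)
    {X Y : C} : ((0 : X ⟶ Y) ▷ A) = 0 := by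
  have hin : ∀ {V : C} (v w : V ⟶ (0 : C) ⊗ A), v = w := by
    intro V v w
    rw [← aux_retr A A' ε η snake v, ← aux_retr A A' ε η snake w,
      (isZero_zero C).eq_of_tgt ((v ▷ A') ≫ (α_ (0 : C) A A').hom ≫ ((0 : C) ◁ ε) ≫ (ρ_ (0 : C)).hom)
         ((w ▷ A') ≫ (α_ (0 : C) A A').hom ≫ ((0 : C) ◁ ε) ≫ (ρ_ (0 : C)).hom)]
  have hid : 𝟙 ((0 : C) ⊗ A) = 0 := hin _ _
  have hout : ∀ {W : C} (g : (0 : C) ⊗ A ⟶ W), g = 0 := fun g => by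
    rw [← Category.id_comp g, hid, zero_comp]
  have h0 : (0 : X ⟶ Y) = (0 : X ⟶ (0 : C)) ≫ (0 : (0 : C) ⟶ Y) := by simp
  rw [h0, comp_whiskerRight, hout ((0 : (0 : C) ⟶ Y) ▷ A), comp_zero]

/-- teleportation from a unitary error basis.  Let `C` be a
dagger compact category with biproducts, `A` an object with dual `A'`
(counit `ε`, unit `η`, snake equations), and `U₁, …, Uₙ : A ⟶ A` a unitary
error basis: unitaries such that
`μ = (1/√n) ⬝ column(ε ∘ (Uᵢ ⊗ 1)) : A ⊗ A' ⟶ ⨁ᵢ I` is unitary, where the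
scalar `s = 1/√n` satisfies `n ⬝ (s ∘ s) = 1`.  With the controlled correction
`γ = ⨁ᵢ Uᵢ†`, composing the measurement `μ` (applied on the first two legs of
`1 ⊗ η`) with `γ` recovers `(1/√n)` times the `n`-fold diagonal of `1_A`. -/
theorem stmt16 {C : Type*} [Category C] [MonoidalCategory C] [SymmetricCategory C]
    [HasZeroMorphisms C] [HasFiniteBiproducts C] (D : Dagger C)
    -- dagger compatibility with the monoidal structure
    (dag_tensor : ∀ {X X' Y Y' : C} (f : X ⟶ X') (g : Y ⟶ Y'),
      D.dag (f ⊗ₘ g) = D.dag f ⊗ₘ D.dag g)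
    -- the dual pair
    (A A' : C) (ε : A ⊗ A' ⟶ 𝟙_ C) (η : 𝟙_ C ⟶ A' ⊗ A)
    (snake : (ρ_ A).inv ≫ (A ◁ η) ≫ (α_ A A' A).inv ≫ (ε ▷ A) ≫ (λ_ A).hom = 𝟙 A)
    (snake' : (λ_ A').inv ≫ (η ▷ A') ≫ (α_ A' A A').hom ≫ (A' ◁ ε) ≫ (ρ_ A').hom = 𝟙 A')
    -- the scalar 1/√n, with n ⬝ s² = 1
    (n : ℕ) (s : 𝟙_ C ⟶ 𝟙_ C)
    (hs : biproduct.lift (fun _ : Fin n => s ≫ s) ≫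
        biproduct.desc (fun _ : Fin n => 𝟙 (𝟙_ C)) = 𝟙 (𝟙_ C))
    -- the unitary error basis
    (U : Fin n → (A ⟶ A))
    (hU : ∀ i, U i ≫ D.dag (U i) = 𝟙 A ∧ D.dag (U i) ≫ U i = 𝟙 A)
    -- the distributor, characterized on biproduct injections
    (dist : (⨁ fun _ : Fin n => 𝟙_ C) ⊗ A ≅ ⨁ fun _ : Fin n => 𝟙_ C ⊗ A)
    (hdist : ∀ i, (biproduct.ι (fun _ : Fin n => 𝟙_ C) i ▷ A) ≫ dist.hom =
      biproduct.ι (fun _ : Fin n => 𝟙_ C ⊗ A) i)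
    -- the measurement μ is unitary
    (μ : A ⊗ A' ⟶ ⨁ fun _ : Fin n => 𝟙_ C)
    (hμdef : μ = biproduct.lift fun i => (U i ▷ A') ≫ ε ≫ s)
    (hμ : μ ≫ D.dag μ = 𝟙 (A ⊗ A') ∧ D.dag μ ≫ μ = 𝟙 (⨁ fun _ : Fin n => 𝟙_ C)) :
    -- the teleportation protocol
    (ρ_ A).inv ≫ (A ◁ η) ≫ (α_ A A' A).inv ≫ (μ ▷ A) ≫ dist.hom ≫
        biproduct.map (fun i => (λ_ A).hom ≫ D.dag (U i)) =
      (λ_ A).inv ≫ (s ▷ A) ≫ (λ_ A).hom ≫ biproduct.lift (fun _ : Fin n => 𝟙 A) := by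
  have zw : ∀ {X Y : C}, ((0 : X ⟶ Y) ▷ A) = 0 :=
    fun {X Y} => aux_zero_whisker A A' ε η snake
  have hdist' : ∀ i, biproduct.ι (fun _ : Fin n => 𝟙_ C ⊗ A) i ≫ dist.inv =
      (biproduct.ι (fun _ : Fin n => 𝟙_ C) i ▷ A) := by
    intro i; rw [← hdist i]; simp
  have jointEpi : ∀ {W : C} (u v : (⨁ fun _ : Fin n => 𝟙_ C) ⊗ A ⟶ W),
      (∀ i, (biproduct.ι (fun _ : Fin n => 𝟙_ C) i ▷ A) ≫ u =
            (biproduct.ι (fun _ : Fin n => 𝟙_ C) i ▷ A) ≫ v) → u = v := by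
    intro W u v h
    have : dist.inv ≫ u = dist.inv ≫ v := by
      apply biproduct.hom_ext'
      intro i
      rw [← Category.assoc, ← Category.assoc, hdist' i, h i]
    exact (cancel_epi dist.inv).mp this
  have hDj : ∀ j, dist.hom ≫ biproduct.π (fun _ : Fin n => 𝟙_ C ⊗ A) j =
      ((D.dag μ ≫ μ ≫ biproduct.π (fun _ : Fin n => 𝟙_ C) j) ▷ A) := by
    intro j
    apply jointEpi
    intro i
    rw [← Category.assoc, hdist i, ← comp_whiskerRight]
    have h2 : D.dag μ ≫ μ ≫ biproduct.π (fun _ : Fin n => 𝟙_ C) j =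
        biproduct.π (fun _ : Fin n => 𝟙_ C) j := by
      rw [← Category.assoc, hμ.2, Category.id_comp]
    rw [h2]
    by_cases h : i = j
    · subst h; simp
    · rw [biproduct.ι_π_ne _ h, biproduct.ι_π_ne _ h, zw]
  apply biproduct.hom_ext
  intro j
  simp only [Category.assoc, biproduct.lift_π, biproduct.map_π, Category.comp_id]
  have hDj' : ∀ {W : C} (g : 𝟙_ C ⊗ A ⟶ W),
      dist.hom ≫ biproduct.π (fun _ : Fin n => 𝟙_ C ⊗ A) j ≫ g =
      ((D.dag μ ≫ μ ≫ biproduct.π (fun _ : Fin n => 𝟙_ C) j) ▷ A) ≫ g := fun g => by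
    rw [← Category.assoc, hDj j]
  rw [hDj']
  have hQ : ∀ {W : C} (g : 𝟙_ C ⊗ A ⟶ W),
      (μ ▷ A) ≫ ((D.dag μ ≫ μ ≫ biproduct.π (fun _ : Fin n => 𝟙_ C) j) ▷ A) ≫ g =
      ((((U j ▷ A') ≫ ε ≫ s)) ▷ A) ≫ g := fun g => by
    rw [← Category.assoc, ← comp_whiskerRight, ← Category.assoc μ, hμ.1, Category.id_comp,
      hμdef, biproduct.lift_π]
  rw [hQ]
  simp only [comp_whiskerRight, Category.assoc]
  rw [← associator_inv_naturality_left_assoc, whisker_exchange_assoc,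
    ← rightUnitor_inv_naturality_assoc]
  rw [show (s ▷ A) ≫ (λ_ A).hom ≫ D.dag (U j) =
      (λ_ A).hom ≫ (λ_ A).inv ≫ (s ▷ A) ≫ (λ_ A).hom ≫ D.dag (U j) from by simp]
  rw [reassoc_of% snake]
  rw [leftUnitor_inv_naturality_assoc, whisker_exchange_assoc, leftUnitor_naturality_assoc,
    (hU j).1, Category.comp_id]
end

section
/- For a bimonoidal category C, the symmetry 1-cells σ_{m,n} = [[0_{n,m}, 1_n],[1_m, 0_{m,n}]] : n+m ← m+n in Mat(C) are equivalences: the 2-cell ν_{m,n} : σ_{n,m} ∘ σ_{m,n} → 1_{m+n}, built from the unitors and nullitors of C, is an isomorphism. -/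
open CategoryTheory MonoidalCategory

universe v u

/-- The symmetry 1-cell `σ_{m,n} = [[0_{n,m}, 1_n], [1_m, 0_{m,n}]] : n+m ← m+n`
of `Mat(C)`: a block permutation matrix with entries the units `I` and `O`. -/
def sigmaM {C : Type u} [Category.{v} C] (B : Bimonoidal C) (m n : ℕ) :
    MatO C (n + m) (m + n) :=
  fun i j =>
    if (i : ℕ) < n then
      if (j : ℕ) < m then B.zero
      else if (i : ℕ) = (j : ℕ) - m then B.one else B.zero
    else
      if (j : ℕ) < m then (if (i : ℕ) - n = (j : ℕ) then B.one else B.zero)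
      else B.zero

namespace Bimonoidal

variable {C : Type u} [Category.{v} C] (B : Bimonoidal C)

/-- Tensoring (additive) of isomorphisms. -/
def addIso {X X' Y Y' : C} (e : X ≅ X') (f : Y ≅ Y') : B.add X Y ≅ B.add X' Y' :=
  @MonoidalCategory.tensorIso C _ B.addMon _ _ _ _ e f

def finSumIso : ∀ {k : ℕ} {F G : Fin k → C}, (∀ j, F j ≅ G j) → (B.finSum F ≅ B.finSum G)
  | 0, _, _, _ => Iso.refl _
  | _ + 1, _, _, e => B.addIso (e 0) (finSumIso fun j => e j.succ)

def finSumZeroIso : ∀ {k : ℕ}, B.finSum (fun _ : Fin k => B.zero) ≅ B.zero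
  | 0 => Iso.refl _
  | _ + 1 => (B.addIso (Iso.refl _) finSumZeroIso).trans (B.addLamIso B.zero)

def finSumDeltaIso : ∀ {k : ℕ} (j0 : Fin k) (X : C),
    B.finSum (fun j => if j = j0 then X else B.zero) ≅ X
  | 0, j0, _ => j0.elim0
  | k + 1, j0, X =>
    Fin.cases
      ((B.addIso (eqToIso (if_pos rfl))
        ((B.finSumIso fun j => eqToIso (if_neg (Fin.succ_ne_zero j))).trans
          B.finSumZeroIso)).trans (B.addRhoIso X))
      (fun j =>
        (B.addIso (eqToIso (if_neg (Fin.succ_ne_zero j).symm))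
          ((B.finSumIso fun i =>
              eqToIso (if_congr (Fin.succ_inj) rfl rfl)).trans
            (finSumDeltaIso j X))).trans (B.addLamIso X))
      j0

end Bimonoidal


/-- Entrywise isomorphism between `σ_{n,m} σ_{m,n}` and the identity matrix. -/
noncomputable def sigmaEntryIso {C : Type u} [Category.{v} C] (B : Bimonoidal C) (m n : ℕ)
    (i j : Fin (m + n)) :
    B.matMul (sigmaM B n m) (sigmaM B m n) i j ≅ B.oneMat (m + n) i j := by
  show B.finSum (fun k => B.mul (sigmaM B n m i k) (sigmaM B m n k j)) ≅ _
  by_cases hij : (i : ℕ) = (j : ℕ)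
  · have hk0 : (if (i : ℕ) < m then n + (i : ℕ) else (i : ℕ) - m) < n + m := by
      have := i.isLt; split <;> omega
    refine ((B.finSumIso
        (G := fun k => if k = (⟨_, hk0⟩ : Fin (n + m)) then B.one else B.zero) ?_).trans
      (B.finSumDeltaIso _ B.one)).trans
      (eqToIso (by simp only [Bimonoidal.oneMat]; rw [if_pos (Fin.ext hij)]))
    intro k
    beta_reduce
    by_cases hk : (k : ℕ) = (if (i : ℕ) < m then n + (i : ℕ) else (i : ℕ) - m)
    · rw [if_pos (Fin.ext hk)]
      simp only [sigmaM]
      have hi := i.isLt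
      split_ifs at hk ⊢ <;>
        first
          | exact B.mulLamIso B.one
          | (exfalso; omega)
    · rw [if_neg (fun h => hk (congrArg Fin.val h))]
      simp only [sigmaM]
      split_ifs at hk ⊢ <;>
        first
          | exact B.nullL _
          | exact B.nullR _
          | (exfalso; omega)
  · refine ((B.finSumIso (G := fun _ => B.zero) ?_).trans B.finSumZeroIso).trans
      (eqToIso (by
        simp only [Bimonoidal.oneMat]
        rw [if_neg (fun h => hij (congrArg Fin.val h))]))
    intro k
    simp only [sigmaM]
    split_ifs <;>
      first
        | exact B.nullL _
        | exact B.nullR _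
        | (exfalso; omega)

/-- for a bimonoidal category `C`, the symmetry 1-cells
`σ_{m,n} : n+m ← m+n` of `Mat(C)` are equivalences: there is an invertible
2-cell `ν_{m,n} : σ_{n,m} ∘ σ_{m,n} ≅ 1_{m+n}` (built from the unitors and
nullitors of `C`). -/
theorem stmt19 {C : Type u} [Category.{v} C] (B : Bimonoidal C) (m n : ℕ) :
    Nonempty (B.matMul (sigmaM B n m) (sigmaM B m n) ≅ B.oneMat (m + n)) := by
  exact ⟨{
    hom := fun i j => (sigmaEntryIso B m n i j).hom
    inv := fun i j => (sigmaEntryIso B m n i j).inv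
    hom_inv_id := by funext i j; exact (sigmaEntryIso B m n i j).hom_inv_id
    inv_hom_id := by funext i j; exact (sigmaEntryIso B m n i j).inv_hom_id }⟩
end
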